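/- arXiv:1912.09187 — 3 statements merged into one kernel-verified Lean document; each statement's English description precedes it below -/
import Mathlib

section
/- Let (γ_n) be a sequence of strictly positive reals with lim n·γ_n = ∞, and set t_n = γ_1 + ⋯ + γ_n. Then for every C > 0, the proportion (1/n)·#{l ∈ {1,…,n} : t_n − t_l ≤ C} tends to 0 as n → ∞. -/
open Filter Finset

/-! Eventually `m γ_m ≥ M`, so for `N ≤ l ≤ n` each `γ_m` with `l < m ≤ n` is at least `M / n` and
`t_n - t_l ≥ (n - l) M / n`. Hence the `l` with `t_n - t_l ≤ C` lie among the first `N` indices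
or the last `C n / M + 1`, and their proportion is at most `(N + 1) / n + C / M`, which is
eventually below any `a > 0` once `M = 2C / a`. -/

lemma sum_Icc_one_sub_sum_Icc_one {G : Type*} [AddCommGroup G] (f : ℕ → G) {l n : ℕ}
    (hln : l ≤ n) : ∑ m ∈ Icc 1 n, f m - ∑ m ∈ Icc 1 l, f m = ∑ m ∈ Ioc l n, f m := by
  have hIcc (k : ℕ) : Icc 1 k = Ioc 0 k := Icc_add_one_left_eq_Ioc 0 k
  rw [hIcc, hIcc, ← sum_Ioc_consecutive f (Nat.zero_le l) hln, add_sub_cancel_left]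

lemma sub_mul_le_mul_sum_Ioc_of_le_mul {γ : ℕ → ℝ} {M : ℝ} {N : ℕ} (hM : 0 ≤ M)
    (hN : ∀ m ≥ N, M ≤ m * γ m) {l n : ℕ} (hNl : N ≤ l) :
    ((n - l : ℕ) : ℝ) * M ≤ n * ∑ m ∈ Ioc l n, γ m := by
  rw [mul_sum, ← Nat.card_Ioc, ← nsmul_eq_mul]
  refine card_nsmul_le_sum _ _ _ fun m hm => ?_
  obtain ⟨hlm, hmn⟩ := mem_Ioc.mp hm
  have hMm := hN m (by omega)
  have hγm : 0 ≤ γ m :=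
    nonneg_of_mul_nonneg_right (hM.trans hMm) (by exact_mod_cast (by omega : 0 < m))
  exact hMm.trans (mul_le_mul_of_nonneg_right (by exact_mod_cast hmn) hγm)

lemma card_le_of_forall_le_imp_sub_le {s : Finset ℕ} {n N d : ℕ}
    (hs : ∀ l ∈ s, l ≤ n ∧ (N ≤ l → n - l ≤ d)) : #s ≤ N + d + 1 := by
  have hsub : s ⊆ range N ∪ Icc (n - d) n := by
    intro l hl
    obtain ⟨hln, hd⟩ := hs l hl
    rw [mem_union, mem_range, mem_Icc]
    by_cases hNl : N ≤ l
    · exact Or.inr ⟨by have := hd hNl; omega, hln⟩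
    · exact Or.inl (by omega)
  calc #s ≤ #(range N ∪ Icc (n - d) n) := card_le_card hsub
    _ ≤ #(range N) + #(Icc (n - d) n) := card_union_le _ _
    _ ≤ N + d + 1 := by simp only [card_range, Nat.card_Icc]; omega

lemma card_filter_partial_sum_close_le {γ t : ℕ → ℝ} (ht : ∀ n, t n = ∑ m ∈ Icc 1 n, γ m)
    {M : ℝ} (hM : 0 < M) {N : ℕ} (hN : ∀ m ≥ N, M ≤ m * γ m) {C : ℝ} (hC : 0 ≤ C) (n : ℕ) :
    (#{l ∈ Icc 1 n | t n - t l ≤ C} : ℝ) ≤ N + C * n / M + 1 := by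
  have hcard := card_le_of_forall_le_imp_sub_le (s := {l ∈ Icc 1 n | t n - t l ≤ C})
    (N := N) (d := ⌊C * n / M⌋₊) fun l hl => by
      obtain ⟨hl, hCl⟩ := mem_filter.mp hl
      refine ⟨(mem_Icc.mp hl).2, fun hNl => Nat.le_floor ?_⟩
      rw [le_div_iff₀ hM]
      calc ((n - l : ℕ) : ℝ) * M ≤ n * (t n - t l) := by
            rw [ht, ht, sum_Icc_one_sub_sum_Icc_one _ (mem_Icc.mp hl).2]
            exact sub_mul_le_mul_sum_Ioc_of_le_mul hM.le hN hNl
        _ ≤ C * n := by rw [mul_comm C]; gcongr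
  calc (#{l ∈ Icc 1 n | t n - t l ≤ C} : ℝ) ≤ N + ⌊C * n / M⌋₊ + 1 := by exact_mod_cast hcard
    _ ≤ N + C * n / M + 1 := by gcongr; exact Nat.floor_le (by positivity)

theorem card_filter_partial_sum_close_div_tendsto_zero_general
    (γ : ℕ → ℝ)
    (hlim : Tendsto (fun n : ℕ => (n : ℝ) * γ n) atTop atTop)
    (t : ℕ → ℝ) (ht : ∀ n, t n = ∑ m ∈ Finset.Icc 1 n, γ m) :
    ∀ C > (0 : ℝ),
      Tendsto (fun n : ℕ =>
          (((Finset.Icc 1 n).filter (fun l => t n - t l ≤ C)).card : ℝ) / n)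
        atTop (nhds 0) := by
  intro C hC
  refine tendsto_order.2 ⟨fun a ha => Eventually.of_forall fun n => ha.trans_le (by positivity),
    fun a ha => ?_⟩
  obtain ⟨N, hN⟩ := eventually_atTop.mp (hlim.eventually_ge_atTop (2 * C / a))
  have hM : 0 < 2 * C / a := by positivity
  have hbound : Tendsto (fun n : ℕ => ((N : ℝ) + 1) / n + a / 2) atTop (nhds (0 + a / 2)) :=
    (tendsto_const_div_atTop_nhds_zero_nat _).add_const _
  filter_upwards [hbound.eventually (gt_mem_nhds (show 0 + a / 2 < a by linarith)),
    eventually_gt_atTop 0] with n hn hn0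
  calc _ ≤ ((N : ℝ) + C * n / (2 * C / a) + 1) / n := by
        gcongr; exact card_filter_partial_sum_close_le ht hM hN hC.le n
    _ = ((N : ℝ) + 1) / n + a / 2 := by field_simp; ring
    _ < a := hn

/-- If `(γ_n)` are strictly positive with `n·γ_n → ∞` and
`t_n = γ_1 + ⋯ + γ_n`, then for every `C > 0` the proportion
`(1/n)·#{l ∈ {1,…,n} : t_n − t_l ≤ C}` tends to `0`. -/
theorem card_filter_partial_sum_close_div_tendsto_zero
    (γ : ℕ → ℝ) (hγ : ∀ n, 0 < γ n)
    (hlim : Tendsto (fun n : ℕ => (n : ℝ) * γ n) atTop atTop)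
    (t : ℕ → ℝ) (ht : ∀ n, t n = ∑ m ∈ Finset.Icc 1 n, γ m) :
    ∀ C > (0 : ℝ),
      Tendsto (fun n : ℕ =>
          (((Finset.Icc 1 n).filter (fun l => t n - t l ≤ C)).card : ℝ) / n)
        atTop (nhds 0) :=
  card_filter_partial_sum_close_div_tendsto_zero_general γ hlim t ht
end

section
/- Let (A_m)_{m∈ℕ} ⊂ 𝓕 and suppose that for each m the sequence (Y_n) of ℝᵈ-valued random variables converges stably on A_m to a kernel K_m. Then there exists a probability kernel K from A := ⋃_m A_m to ℝᵈ agreeing almost surely with K_m on each A_m, and Y_n converges stably to K on A. -/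
/-!
Two stable limits `K` on `A` and `K'` on `A'` give the same set integrals
`∫_{A ∩ A' ∩ B} ∫ f dK dP` for every measurable `B` and bounded continuous `f`. These integrals
determine `P|_{A ∩ A'} ⊗ₘ K` and hence `K` a.e. on `A ∩ A'`, so gluing the `K_m` along the first
piece containing `ω` yields a kernel that agrees a.e. with every `K_m`. Conversely, any kernel
that agrees a.e. with `K_m` on `A_m` is a stable limit on each disjointed piece
`A_m \ (A_0 ∪ ⋯ ∪ A_{m-1})`, and Tannery's theorem passes the convergence to their union.
-/

open MeasureTheory Filter ProbabilityTheory

/-- `(Y_n)` converges stably on `A` to the probability kernel `K`. -/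
def StablyConvergesOn {Ω : Type*} [MeasurableSpace Ω] {E : Type*}
    [MeasurableSpace E] [TopologicalSpace E]
    (P : Measure Ω) (Y : ℕ → Ω → E) (A : Set Ω) (K : Kernel Ω E) : Prop :=
  ∀ B : Set Ω, MeasurableSet B → ∀ f : E → ℝ, Continuous f → (∃ C, ∀ x, |f x| ≤ C) →
    Tendsto (fun n => ∫ ω in A ∩ B, f (Y n ω) ∂P) atTop
      (nhds (∫ ω in A ∩ B, ∫ y, f y ∂(K ω) ∂P))

open Set Function
open scoped BoundedContinuousFunction

/-- `(μ ⊗ₘ κ) (s ×ˢ t)` is the mass of `t` under the mixture of `κ` over `μ` restricted to `s`, and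
this mixture is determined by the integrals of bounded continuous functions. -/
theorem ProbabilityTheory.Kernel.ae_eq_of_forall_setIntegral_eq {Ω E : Type*}
    [MeasurableSpace Ω] [MeasurableSpace E] [TopologicalSpace E]
    [HasOuterApproxClosed E] [BorelSpace E] [MeasurableSpace.CountablyGenerated E]
    {μ : Measure Ω} [IsFiniteMeasure μ] {κ η : Kernel Ω E} [IsFiniteKernel κ] [IsFiniteKernel η]
    (h : ∀ s, MeasurableSet s → ∀ f : E →ᵇ ℝ,
      ∫ ω in s, ∫ y, f y ∂κ ω ∂μ = ∫ ω in s, ∫ y, f y ∂η ω ∂μ) :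
    κ =ᵐ[μ] η := by
  refine Kernel.ae_eq_of_compProd_eq (Measure.ext_prod fun {s t} hs ht => ?_)
  have mixture : ∀ (ξ : Kernel Ω E) [IsFiniteKernel ξ],
      (μ ⊗ₘ ξ) (s ×ˢ t) = (μ.restrict s ⊗ₘ ξ).snd t := fun ξ _ => by
    rw [Measure.snd_apply ht, ← univ_prod, Measure.compProd_apply_prod hs ht,
      Measure.compProd_apply_prod .univ ht, Measure.restrict_univ]
  rw [mixture κ, mixture η]
  congr 1
  refine ext_of_forall_integral_eq_of_IsFiniteMeasure fun f => ?_
  have hf : ∀ (ξ : Kernel Ω E) [IsFiniteKernel ξ],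
      ∫ y, f y ∂(μ.restrict s ⊗ₘ ξ).snd = ∫ ω in s, ∫ y, f y ∂ξ ω ∂μ := fun ξ _ => by
    rw [Measure.snd, integral_map measurable_snd.aemeasurable f.continuous.aestronglyMeasurable,
      Measure.integral_compProd (f := fun p => f p.2) (.of_bound
        (f.continuous.aestronglyMeasurable.comp_measurable measurable_snd) ‖f‖
        (.of_forall fun p => f.norm_coe_le_norm p.2))]
  rw [hf κ, hf η, h s hs f]

theorem Set.exists_mem_or_notMem_iUnion {Ω : Type*} (A : ℕ → Set Ω) (ω : Ω) :
    ∃ m, ω ∈ A m ∪ (⋃ j, A j)ᶜ := by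
  by_cases hω : ω ∈ ⋃ j, A j
  · obtain ⟨m, hm⟩ := mem_iUnion.mp hω
    exact ⟨m, .inl hm⟩
  · exact ⟨0, .inr hω⟩

namespace ProbabilityTheory.Kernel

variable {Ω E : Type*} [MeasurableSpace Ω] [MeasurableSpace E]

open scoped Classical in
/-- The kernel equal to `κ m` at the points of `⋃ j, A j` whose first piece is `A m`, and to `κ 0`
off `⋃ j, A j`. -/
noncomputable def gluing {A : ℕ → Set Ω} (hA : ∀ m, MeasurableSet (A m)) (κ : ℕ → Kernel Ω E) :
    Kernel Ω E where
  toFun ω := κ (Nat.find (exists_mem_or_notMem_iUnion A ω)) ω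
  measurable' := Measurable.find (p := fun m ω => ω ∈ A m ∪ (⋃ j, A j)ᶜ)
    (fun m => (κ m).measurable)
    (fun m => (hA m).union (MeasurableSet.iUnion hA).compl) (exists_mem_or_notMem_iUnion A)

variable {A : ℕ → Set Ω} (hA : ∀ m, MeasurableSet (A m)) (κ : ℕ → Kernel Ω E)

instance [∀ m, IsMarkovKernel (κ m)] : IsMarkovKernel (gluing hA κ) :=
  ⟨fun ω => by dsimp [gluing]; infer_instance⟩

theorem exists_gluing_apply_eq {ω : Ω} (hω : ω ∈ ⋃ j, A j) :
    ∃ j, ω ∈ A j ∧ gluing hA κ ω = κ j ω := by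
  classical
  exact ⟨_, (Nat.find_spec (exists_mem_or_notMem_iUnion A ω)).resolve_right (not_not_intro hω), rfl⟩

theorem gluing_ae_eq {μ : Measure Ω} (hκ : ∀ j m, κ j =ᵐ[μ.restrict (A j ∩ A m)] κ m) (m : ℕ) :
    gluing hA κ =ᵐ[μ.restrict (A m)] κ m := by
  have hoverlap : ∀ᵐ ω ∂μ.restrict (A m), ∀ j, ω ∈ A j → κ j ω = κ m ω := by
    refine ae_all_iff.mpr fun j => ae_imp_of_ae_restrict ?_
    rw [Measure.restrict_restrict (hA j)]
    exact hκ j m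
  filter_upwards [hoverlap, ae_restrict_mem (hA m)] with ω hω hωm
  obtain ⟨j, hj, hglue⟩ := exists_gluing_apply_eq hA κ (mem_iUnion_of_mem m hωm)
  rw [hglue, hω j hj]

end ProbabilityTheory.Kernel

namespace StablyConvergesOn

variable {Ω E : Type*} [MeasurableSpace Ω] [MeasurableSpace E] [TopologicalSpace E]
  {P : Measure Ω} {Y : ℕ → Ω → E} {A A' : Set Ω} {K K' L : Kernel Ω E}

theorem mono (h : StablyConvergesOn P Y A K) (hA' : MeasurableSet A') (hsub : A' ⊆ A) :
    StablyConvergesOn P Y A' K := by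
  intro B hB f hf hfb
  simpa only [← inter_assoc, inter_eq_right.mpr hsub] using h (A' ∩ B) (hA'.inter hB) f hf hfb

theorem congr_ae (h : StablyConvergesOn P Y A K) (hKK' : K =ᵐ[P.restrict A] K') :
    StablyConvergesOn P Y A K' := by
  intro B hB f hf hfb
  convert h B hB f hf hfb using 2
  refine integral_congr_ae (ae_restrict_of_ae_restrict_of_subset inter_subset_left ?_)
  filter_upwards [hKK'] with ω hω
  rw [hω]

theorem ae_eq_on_inter [HasOuterApproxClosed E] [BorelSpace E]
    [MeasurableSpace.CountablyGenerated E] [IsFiniteMeasure P] [IsFiniteKernel K]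
    [IsFiniteKernel K'] (hA : MeasurableSet A) (hA' : MeasurableSet A')
    (h : StablyConvergesOn P Y A K) (h' : StablyConvergesOn P Y A' K') :
    K =ᵐ[P.restrict (A ∩ A')] K' := by
  refine Kernel.ae_eq_of_forall_setIntegral_eq fun s hs f => ?_
  have hf : ∃ C, ∀ x, |f x| ≤ C := ⟨‖f‖, f.norm_coe_le_norm⟩
  rw [Measure.restrict_restrict hs]
  refine tendsto_nhds_unique (f := fun n => ∫ ω in s ∩ (A ∩ A'), f (Y n ω) ∂P) (l := atTop) ?_ ?_
  · simpa only [inter_comm, inter_left_comm] using h (A' ∩ s) (hA'.inter hs) f f.continuous hf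
  · simpa only [inter_comm, inter_left_comm] using h' (A ∩ s) (hA.inter hs) f f.continuous hf

/-- Tannery's theorem: the set integrals over `⋃ m, D m ∩ B` are the sums of those over the
pieces `D m ∩ B`, dominated by `C * P (D m ∩ B)`, which is summable. -/
theorem iUnion [OpensMeasurableSpace E] [IsFiniteMeasure P] [IsMarkovKernel L]
    (hY : ∀ n, Measurable (Y n)) {D : ℕ → Set Ω} (hD : ∀ m, MeasurableSet (D m))
    (hdisj : Pairwise (Disjoint on D)) (h : ∀ m, StablyConvergesOn P Y (D m) L) :
    StablyConvergesOn P Y (⋃ m, D m) L := by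
  intro B hB f hf ⟨C, hC⟩
  have hDB : ∀ m, MeasurableSet (D m ∩ B) := fun m => (hD m).inter hB
  have hdisjB : Pairwise (Disjoint on fun m => D m ∩ B) :=
    hdisj.mono fun i j => Disjoint.mono inter_subset_left inter_subset_left
  have hsum : ∀ g : Ω → ℝ, AEStronglyMeasurable g P → (∀ ω, |g ω| ≤ C) →
      ∫ ω in (⋃ m, D m) ∩ B, g ω ∂P = ∑' m, ∫ ω in D m ∩ B, g ω ∂P := fun g hg hgC => by
    rw [iUnion_inter]
    exact integral_iUnion hDB hdisjB (Integrable.of_bound hg C (.of_forall hgC)).integrableOn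
  have hfY : ∀ n, AEStronglyMeasurable (fun ω => f (Y n ω)) P := fun n =>
    (hf.measurable.comp (hY n)).aestronglyMeasurable
  have hLf : AEStronglyMeasurable (fun ω => ∫ y, f y ∂L ω) P :=
    hf.stronglyMeasurable.integral_kernel.aestronglyMeasurable
  have hLfC : ∀ ω, |∫ y, f y ∂L ω| ≤ C := fun ω => by
    simpa using norm_integral_le_of_norm_le_const (μ := L ω) (f := f) (.of_forall hC)
  simp only [hsum _ (hfY _) fun ω => hC _, hsum _ hLf hLfC]
  refine tendsto_tsum_of_dominated_convergence
    ((summable_measure_toReal (μ := P) hDB hdisjB).mul_left C)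
    (fun m => h m B hB f hf ⟨C, hC⟩) (.of_forall fun n m => ?_)
  exact norm_setIntegral_le_of_norm_le_const (measure_lt_top _ _) fun ω _ => hC _

theorem iUnion_of_ae_eq [OpensMeasurableSpace E] [IsFiniteMeasure P] [IsMarkovKernel L]
    (hY : ∀ n, Measurable (Y n)) {A : ℕ → Set Ω} (hA : ∀ m, MeasurableSet (A m))
    {K : ℕ → Kernel Ω E} (h : ∀ m, StablyConvergesOn P Y (A m) (K m))
    (hL : ∀ m, L =ᵐ[P.restrict (A m)] K m) :
    StablyConvergesOn P Y (⋃ m, A m) L := by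
  rw [← iUnion_disjointed]
  exact iUnion hY (.disjointed hA) (disjoint_disjointed A) fun m =>
    ((h m).congr_ae (hL m).symm).mono (.disjointed hA m) (disjointed_subset A m)

end StablyConvergesOn

/-- If `(Y_n)` converges stably on each `A_m` to a kernel `K_m`, then there
is a probability kernel `K` agreeing a.s. with `K_m` on each `A_m` such that `(Y_n)`
converges stably to `K` on `A = ⋃_m A_m`; moreover every such kernel is a stable limit
of `(Y_n)` on `A`. -/
theorem stable_convergence_on_countable_union {Ω : Type*} [MeasurableSpace Ω]
    (P : Measure Ω) [IsProbabilityMeasure P] {d : ℕ}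
    (Y : ℕ → Ω → EuclideanSpace ℝ (Fin d)) (hY : ∀ n, Measurable (Y n))
    (A : ℕ → Set Ω) (hA : ∀ m, MeasurableSet (A m))
    (K : ℕ → Kernel Ω (EuclideanSpace ℝ (Fin d))) [∀ m, IsMarkovKernel (K m)]
    (h : ∀ m, StablyConvergesOn P Y (A m) (K m)) :
    (∃ L : Kernel Ω (EuclideanSpace ℝ (Fin d)), IsMarkovKernel L ∧
        (∀ m, ∀ᵐ ω ∂(P.restrict (A m)), L ω = K m ω) ∧
        StablyConvergesOn P Y (⋃ m, A m) L) ∧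
      (∀ L : Kernel Ω (EuclideanSpace ℝ (Fin d)), IsMarkovKernel L →
        (∀ m, ∀ᵐ ω ∂(P.restrict (A m)), L ω = K m ω) →
        StablyConvergesOn P Y (⋃ m, A m) L) := by
  have hunion (L : Kernel Ω (EuclideanSpace ℝ (Fin d))) (_ : IsMarkovKernel L)
      (hL : ∀ m, L =ᵐ[P.restrict (A m)] K m) : StablyConvergesOn P Y (⋃ m, A m) L :=
    StablyConvergesOn.iUnion_of_ae_eq hY hA h hL
  have hglue : ∀ m, Kernel.gluing hA K =ᵐ[P.restrict (A m)] K m :=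
    Kernel.gluing_ae_eq hA K fun j m => (h j).ae_eq_on_inter (hA j) (hA m) (h m)
  exact ⟨⟨_, inferInstance, hglue, hunion _ inferInstance hglue⟩, hunion⟩
end

section
/- Let (X_n) be ℝ^{d′}-valued random variables converging in probability on A ∈ 𝓕 to a random variable X_∞, and let (Y_n) be ℝᵈ-valued random variables converging stably on A to a kernel K. Then the pair (X_n, Y_n) converges stably on A to the kernel K̄(ω, d(x,y)) = δ_{X_∞(ω)}(dx) ⊗ K(ω, dy). -/
/-!
Fix a measurable `B` with `P (A ∩ B) ≠ 0`. Testing stable convergence against `B` is the same as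
testing weak convergence of the laws under the conditional probability `P[|A ∩ B]`, and under
`P[|A ∩ B]` the difference `(X_n, Y_n) - (X_∞, Y_n)` still tends to `0` in probability. By
Slutsky's theorem it therefore suffices to show that the laws of `(X_∞, Y_n)` converge to the
image of `P[|A ∩ B] ⊗ₘ K` under `(ω, y) ↦ (X_∞ ω, y)`, and by the portmanteau theorem only
bounded Lipschitz test functions `g` have to be checked. When `X_∞` is replaced by a simple
function `s`, the integral of `g (s, Y_n)` splits over the finitely many fibres of `s` into
integrals to which stable convergence applies directly. Approximating `X_∞` by simple functions
costs at most `∫ min (2 C) (L · dist (X_∞, s))`, uniformly in `n`, and this tends to `0` by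
dominated convergence.
-/

open MeasureTheory Filter ProbabilityTheory

open Topology

theorem LipschitzWith.abs_sub_le_min_of_abs_le {F E : Type*} [PseudoMetricSpace F]
    [PseudoMetricSpace E] {g : F × E → ℝ} {L : NNReal} (hg : LipschitzWith L g) {C : ℝ}
    (hgC : ∀ z, |g z| ≤ C) (x x' : F) (y : E) :
    |g (x, y) - g (x', y)| ≤ min (2 * C) (L * dist x x') := by
  refine le_min ?_ ?_
  · linarith [abs_sub (g (x, y)) (g (x', y)), hgC (x, y), hgC (x', y)]
  · simpa [Real.dist_eq, Prod.dist_eq] using hg.dist_le_mul (x, y) (x', y)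

theorem tendsto_of_forall_abs_sub_le {a : ℕ → ℝ} {a' : ℕ → ℕ → ℝ} {b : ℝ} {b' e : ℕ → ℝ}
    (he : Tendsto e atTop (𝓝 0)) (ha : ∀ m n, |a n - a' m n| ≤ e m) (hb : ∀ m, |b - b' m| ≤ e m)
    (h : ∀ m, Tendsto (a' m) atTop (𝓝 (b' m))) : Tendsto a atTop (𝓝 b) := by
  refine TendstoUniformly.tendsto_of_eventually_tendsto (p := atTop) ?_ (.of_forall h) ?_
  · refine Metric.tendstoUniformly_iff.2 fun ε hε => ?_
    filter_upwards [he.eventually (gt_mem_nhds hε)] with m hm n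
    exact (ha m n).trans_lt hm
  · refine tendsto_iff_dist_tendsto_zero.2 (squeeze_zero (fun _ => dist_nonneg) (fun m => ?_) he)
    rw [Real.dist_eq, abs_sub_comm]
    exact hb m

namespace MeasureTheory

theorem abs_integral_sub_integral_le_of_abs_sub_le {Ω : Type*} [MeasurableSpace Ω]
    {μ : Measure Ω} {φ ψ b : Ω → ℝ} (hφ : Integrable φ μ) (hψ : Integrable ψ μ)
    (hb : Integrable b μ) (h : ∀ ω, |φ ω - ψ ω| ≤ b ω) :
    |∫ ω, φ ω ∂μ - ∫ ω, ψ ω ∂μ| ≤ ∫ ω, b ω ∂μ := by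
  rw [← integral_sub hφ hψ]
  exact norm_integral_le_of_norm_le (f := fun ω => φ ω - ψ ω) hb (ae_of_all _ h)

theorem SimpleFunc.integral_eq_sum_setIntegral_preimage {Ω F G : Type*}
    [MeasurableSpace Ω] [MeasurableSpace F] [NormedAddCommGroup G] [NormedSpace ℝ G]
    {μ : Measure Ω} (s : SimpleFunc Ω F) {φ : F → Ω → G}
    (hφ : ∀ x ∈ s.range, Integrable (φ x) μ) :
    ∫ ω, φ (s ω) ω ∂μ = ∑ x ∈ s.range, ∫ ω in s ⁻¹' {x}, φ x ω ∂μ := by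
  have hcover : ⋃ x ∈ s.range, s ⁻¹' {x} = Set.univ := by
    ext ω; simp
  have on_fiber : ∀ x, Set.EqOn (fun ω => φ (s ω) ω) (φ x) (s ⁻¹' {x}) := by
    rintro x ω rfl; rfl
  calc ∫ ω, φ (s ω) ω ∂μ = ∫ ω in ⋃ x ∈ s.range, s ⁻¹' {x}, φ (s ω) ω ∂μ := by
        rw [hcover, Measure.restrict_univ]
    _ = ∑ x ∈ s.range, ∫ ω in s ⁻¹' {x}, φ (s ω) ω ∂μ :=
        integral_biUnion_finset _ (fun x _ => s.measurableSet_fiber x)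
          (fun x _ y _ hxy => (Set.disjoint_singleton.2 hxy).preimage s)
          (fun x hx => (hφ x hx).integrableOn.congr_fun (on_fiber x).symm
            (s.measurableSet_fiber x))
    _ = ∑ x ∈ s.range, ∫ ω in s ⁻¹' {x}, φ x ω ∂μ :=
        Finset.sum_congr rfl fun x _ =>
          setIntegral_congr_fun (s.measurableSet_fiber x) (on_fiber x)

theorem Measure.integral_map_compProd_of_abs_le {Ω E F : Type*} [MeasurableSpace Ω]
    [MeasurableSpace E] [MeasurableSpace F] {ν : Measure Ω} [IsFiniteMeasure ν]
    {K : Kernel Ω E} [IsFiniteKernel K] {ξ : Ω → F} (hξ : Measurable ξ) {g : F × E → ℝ}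
    (hg : Measurable g) {C : ℝ} (hgC : ∀ z, |g z| ≤ C) :
    ∫ z, g z ∂(ν ⊗ₘ K).map (fun p => (ξ p.1, p.2)) = ∫ ω, ∫ y, g (ξ ω, y) ∂K ω ∂ν := by
  have hZ : Measurable fun p : Ω × E => (ξ p.1, p.2) :=
    (hξ.comp measurable_fst).prodMk measurable_snd
  rw [integral_map hZ.aemeasurable hg.aestronglyMeasurable]
  exact integral_compProd (f := fun p => g (ξ p.1, p.2))
    (.of_bound (hg.comp hZ).aestronglyMeasurable C (ae_of_all _ fun _ => hgC _))

theorem integrable_integral_kernel_comp_of_abs_le {Ω E F : Type*} [MeasurableSpace Ω]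
    [MeasurableSpace E] [MeasurableSpace F] {μ : Measure Ω} [IsFiniteMeasure μ] {K : Kernel Ω E}
    [IsMarkovKernel K] {ζ : Ω → F} (hζ : Measurable ζ) {g : F × E → ℝ} (hg : Measurable g)
    {C : ℝ} (hgC : ∀ z, |g z| ≤ C) : Integrable (fun ω => ∫ y, g (ζ ω, y) ∂K ω) μ := by
  have hm : StronglyMeasurable fun ω => ∫ y, g (ζ ω, y) ∂K ω :=
    (hg.comp ((hζ.comp measurable_fst).prodMk measurable_snd)).stronglyMeasurable
      |>.integral_kernel_prod_right'
  exact .of_bound hm.aestronglyMeasurable C (ae_of_all _ fun _ =>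
    (norm_integral_le_of_norm_le_const (ae_of_all _ fun _ => hgC _)).trans (by simp))

variable {Ω ι E : Type*} [MeasurableSpace Ω] {l : Filter ι}

theorem tendstoInMeasure_restrict_of_tendsto_measure_inter [PseudoMetricSpace E]
    {P : Measure Ω} {A : Set Ω} (hA : MeasurableSet A) {X : ι → Ω → E} {X' : Ω → E}
    (h : ∀ ε > (0 : ℝ), Tendsto (fun i => P ({ω | ε < dist (X i ω) (X' ω)} ∩ A)) l (𝓝 0)) :
    TendstoInMeasure (P.restrict A) X l X' := by
  refine tendstoInMeasure_iff_dist.2 fun ε hε => ?_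
  refine tendsto_of_tendsto_of_tendsto_of_le_of_le tendsto_const_nhds
    (h (ε / 2) (by positivity)) (fun _ => bot_le) fun i => ?_
  rw [Measure.restrict_apply' hA]
  exact measure_mono (Set.inter_subset_inter_left _ fun ω hω => by
    simp only [Set.mem_ofPred_eq] at hω ⊢; linarith)

theorem TendstoInMeasure.of_le_smul [EDist E] {μ ν : Measure Ω} {X : ι → Ω → E} {X' : Ω → E}
    {c : ENNReal} (hc : c ≠ ⊤) (hνμ : ν ≤ c • μ) (h : TendstoInMeasure μ X l X') :
    TendstoInMeasure ν X l X' := fun ε hε => by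
  have hc_mul := ENNReal.Tendsto.const_mul (h ε hε) (.inr hc)
  rw [mul_zero] at hc_mul
  exact tendsto_of_tendsto_of_tendsto_of_le_of_le tendsto_const_nhds hc_mul
    (fun _ => bot_le) fun _ => hνμ _

theorem TendstoInMeasure.prodMk_sub_prodMk {F : Type*} [SeminormedAddCommGroup E]
    [SeminormedAddCommGroup F] {μ : Measure Ω} {X : ι → Ω → E} {X' : Ω → E} {Y : ι → Ω → F}
    (h : TendstoInMeasure μ X l X') :
    TendstoInMeasure μ ((fun i ω => (X i ω, Y i ω)) - fun i ω => (X' ω, Y i ω)) l 0 := by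
  intro ε hε
  simp only [Prod.edist_eq, Pi.sub_apply, Pi.zero_apply, Prod.fst_sub, Prod.snd_sub,
    Prod.fst_zero, Prod.snd_zero, sub_self, edist_self, max_zero]
  simpa [edist_eq_enorm_sub] using h ε hε

end MeasureTheory

namespace ProbabilityTheory

theorem integral_cond_eq_inv_smul_setIntegral {Ω G : Type*} [MeasurableSpace Ω]
    [NormedAddCommGroup G] [NormedSpace ℝ G] (P : Measure Ω) (s : Set Ω) (φ : Ω → G) :
    ∫ ω, φ ω ∂P[|s] = (P.real s)⁻¹ • ∫ ω in s, φ ω ∂P := by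
  rw [cond, integral_smul_measure, ENNReal.toReal_inv, measureReal_def]

theorem cond_inter_le_smul_restrict {Ω : Type*} [MeasurableSpace Ω] (P : Measure Ω)
    (A B : Set Ω) : P[|A ∩ B] ≤ (P (A ∩ B))⁻¹ • P.restrict A :=
  _root_.smul_le_smul_left _ (Measure.restrict_mono Set.inter_subset_left le_rfl)

theorem Kernel.integral_deterministic_prod {Ω F E G : Type*} [MeasurableSpace Ω]
    [MeasurableSpace F] [MeasurableSpace E] [NormedAddCommGroup G] [NormedSpace ℝ G]
    {ξ : Ω → F} (hξ : Measurable ξ) (κ : Kernel Ω E) [IsSFiniteKernel κ] (ω : Ω)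
    {f : F × E → G} (hf : AEStronglyMeasurable f ((deterministic ξ hξ ×ₖ κ) ω)) :
    ∫ z, f z ∂(deterministic ξ hξ ×ₖ κ) ω = ∫ y, f (ξ ω, y) ∂κ ω := by
  rw [prod_apply, deterministic_apply, Measure.dirac_prod] at hf ⊢
  exact integral_map measurable_prodMk_left.aemeasurable hf

end ProbabilityTheory

section LipschitzIntegral

variable {Ω E F : Type*} [MeasurableSpace Ω] {μ : Measure Ω} [IsFiniteMeasure μ]
  [PseudoMetricSpace E] [MeasurableSpace E] [OpensMeasurableSpace E] [SecondCountableTopology E]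
  [PseudoMetricSpace F] [MeasurableSpace F] [OpensMeasurableSpace F] [SecondCountableTopology F]
  {ξ ζ ζ' : Ω → F} {c : ℝ}

theorem integrable_min_mul_dist (hζ : Measurable ζ) (hζ' : Measurable ζ') (hc : 0 ≤ c)
    (L : NNReal) : Integrable (fun ω => min c (L * dist (ζ ω) (ζ' ω))) μ :=
  .of_bound (by fun_prop) c (ae_of_all _ fun ω => by
    rw [Real.norm_of_nonneg (le_min hc (by positivity))]
    exact min_le_left _ _)

theorem tendsto_integral_min_mul_dist_approx (hξ : Measurable ξ) (hc : 0 ≤ c) (L : NNReal) :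
    Tendsto (fun m => ∫ ω, min c (L * dist (ξ ω) (hξ.stronglyMeasurable.approx m ω)) ∂μ) atTop
      (𝓝 0) := by
  have hdist : ∀ ω, Tendsto (fun m => dist (ξ ω) (hξ.stronglyMeasurable.approx m ω)) atTop
      (𝓝 0) := fun ω => by
    simpa [dist_comm] using
      tendsto_iff_dist_tendsto_zero.1 (hξ.stronglyMeasurable.tendsto_approx ω)
  have hdom := tendsto_integral_of_dominated_convergence (fun _ => c)
    (fun m =>
      (integrable_min_mul_dist (μ := μ) hξ (SimpleFunc.measurable _) hc L).aestronglyMeasurable)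
    (integrable_const c)
    (fun m => ae_of_all _ fun ω => by
      rw [Real.norm_of_nonneg (le_min hc (by positivity))]
      exact min_le_left _ _)
    (ae_of_all _ fun ω => by
      simpa [hc] using (tendsto_const_nhds (x := c)).min ((hdist ω).const_mul (L : ℝ)))
  rwa [integral_zero] at hdom

variable {g : F × E → ℝ} {L : NNReal} {C : ℝ}

theorem LipschitzWith.abs_integral_sub_integral_le (hg : LipschitzWith L g) (hC : 0 ≤ C)
    (hgC : ∀ z, |g z| ≤ C) (hζ : Measurable ζ) (hζ' : Measurable ζ') {Y : Ω → E}
    (hY : Measurable Y) :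
    |∫ ω, g (ζ ω, Y ω) ∂μ - ∫ ω, g (ζ' ω, Y ω) ∂μ| ≤
      ∫ ω, min (2 * C) (L * dist (ζ ω) (ζ' ω)) ∂μ :=
  abs_integral_sub_integral_le_of_abs_sub_le
    (.of_bound (hg.continuous.measurable.comp (hζ.prodMk hY)).aestronglyMeasurable C
      (ae_of_all _ fun _ => hgC _))
    (.of_bound (hg.continuous.measurable.comp (hζ'.prodMk hY)).aestronglyMeasurable C
      (ae_of_all _ fun _ => hgC _))
    (integrable_min_mul_dist hζ hζ' (by positivity) L)
    fun ω => hg.abs_sub_le_min_of_abs_le hgC _ _ _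

theorem LipschitzWith.abs_integral_integral_kernel_sub_le {K : Kernel Ω E} [IsMarkovKernel K]
    (hg : LipschitzWith L g) (hC : 0 ≤ C) (hgC : ∀ z, |g z| ≤ C) (hζ : Measurable ζ)
    (hζ' : Measurable ζ') :
    |∫ ω, ∫ y, g (ζ ω, y) ∂K ω ∂μ - ∫ ω, ∫ y, g (ζ' ω, y) ∂K ω ∂μ| ≤
      ∫ ω, min (2 * C) (L * dist (ζ ω) (ζ' ω)) ∂μ :=
  abs_integral_sub_integral_le_of_abs_sub_le
    (integrable_integral_kernel_comp_of_abs_le hζ hg.continuous.measurable hgC)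
    (integrable_integral_kernel_comp_of_abs_le hζ' hg.continuous.measurable hgC)
    (integrable_min_mul_dist hζ hζ' (by positivity) L) fun ω => by
      simpa using hg.abs_integral_sub_integral_le (μ := K ω) hC hgC measurable_const
        measurable_const measurable_id

end LipschitzIntegral

namespace StablyConvergesOn

variable {Ω E F : Type*} [MeasurableSpace Ω] {P : Measure Ω} [IsFiniteMeasure P]
  [MeasurableSpace E] [MeasurableSpace F] {Y : ℕ → Ω → E} {A B : Set Ω} {K : Kernel Ω E}
  [IsMarkovKernel K]

theorem tendsto_setIntegral_comp_simpleFunc [TopologicalSpace E] [OpensMeasurableSpace E]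
    [TopologicalSpace F] (h : StablyConvergesOn P Y A K) (hY : ∀ n, Measurable (Y n))
    (hB : MeasurableSet B) (s : SimpleFunc Ω F) {g : F × E → ℝ} (hg : Continuous g) {C : ℝ}
    (hgC : ∀ z, |g z| ≤ C) :
    Tendsto (fun n => ∫ ω in A ∩ B, g (s ω, Y n ω) ∂P) atTop
      (𝓝 (∫ ω in A ∩ B, ∫ y, g (s ω, y) ∂K ω ∂P)) := by
  have hgx : ∀ x, Continuous fun y => g (x, y) := fun x => hg.comp (.prodMk_right x)
  have fibers : ∀ φ : F → Ω → ℝ, (∀ x, Integrable (φ x) (P.restrict (A ∩ B))) →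
      ∫ ω in A ∩ B, φ (s ω) ω ∂P = ∑ x ∈ s.range, ∫ ω in A ∩ (B ∩ s ⁻¹' {x}), φ x ω ∂P := by
    intro φ hφ
    rw [s.integral_eq_sum_setIntegral_preimage fun x _ => hφ x]
    refine Finset.sum_congr rfl fun x _ => ?_
    rw [Measure.restrict_restrict (s.measurableSet_fiber x), Set.inter_comm, Set.inter_assoc]
  have hI : ∀ n, ∫ ω in A ∩ B, g (s ω, Y n ω) ∂P =
      ∑ x ∈ s.range, ∫ ω in A ∩ (B ∩ s ⁻¹' {x}), g (x, Y n ω) ∂P := fun n =>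
    fibers _ fun x => .of_bound ((hgx x).measurable.comp (hY n)).aestronglyMeasurable C
      (ae_of_all _ fun _ => hgC _)
  have hJ : ∫ ω in A ∩ B, ∫ y, g (s ω, y) ∂K ω ∂P =
      ∑ x ∈ s.range, ∫ ω in A ∩ (B ∩ s ⁻¹' {x}), ∫ y, g (x, y) ∂K ω ∂P :=
    fibers _ fun x => .of_bound (hgx x).stronglyMeasurable.integral_kernel.aestronglyMeasurable C
      (ae_of_all _ fun ω => (norm_integral_le_of_norm_le_const (ae_of_all _ fun y => hgC _)).trans
        (by simp))
  rw [hJ]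
  exact (tendsto_finsetSum _ fun x _ => h _ (hB.inter (s.measurableSet_fiber x)) _ (hgx x)
    ⟨C, fun y => hgC _⟩).congr fun n => (hI n).symm

theorem tendsto_setIntegral_comp_of_lipschitzWith [PseudoMetricSpace E] [OpensMeasurableSpace E]
    [SecondCountableTopology E] [PseudoMetricSpace F] [OpensMeasurableSpace F]
    [SecondCountableTopology F] (h : StablyConvergesOn P Y A K) (hY : ∀ n, Measurable (Y n))
    (hB : MeasurableSet B) {ξ : Ω → F} (hξ : Measurable ξ) {g : F × E → ℝ} {L : NNReal}
    (hg : LipschitzWith L g) {C : ℝ} (hC : 0 ≤ C) (hgC : ∀ z, |g z| ≤ C) :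
    Tendsto (fun n => ∫ ω in A ∩ B, g (ξ ω, Y n ω) ∂P) atTop
      (𝓝 (∫ ω in A ∩ B, ∫ y, g (ξ ω, y) ∂K ω ∂P)) := by
  let s := hξ.stronglyMeasurable.approx
  exact tendsto_of_forall_abs_sub_le (tendsto_integral_min_mul_dist_approx hξ (by positivity) L)
    (fun m n => hg.abs_integral_sub_integral_le hC hgC hξ (s m).measurable (hY n))
    (fun m => hg.abs_integral_integral_kernel_sub_le hC hgC hξ (s m).measurable)
    fun m => h.tendsto_setIntegral_comp_simpleFunc hY hB (s m) hg.continuous hgC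

theorem tendstoInDistribution_cond [SeminormedAddCommGroup E] [OpensMeasurableSpace E]
    [SecondCountableTopology E] [SeminormedAddCommGroup F] [OpensMeasurableSpace F]
    [SecondCountableTopology F] (h : StablyConvergesOn P Y A K) (hY : ∀ n, Measurable (Y n))
    (hB : MeasurableSet B) [IsProbabilityMeasure P[|A ∩ B]] {ξ : Ω → F} (hξ : Measurable ξ) :
    TendstoInDistribution (fun n ω => (ξ ω, Y n ω)) atTop (fun p : Ω × E => (ξ p.1, p.2))
      (fun _ => P[|A ∩ B]) (P[|A ∩ B] ⊗ₘ K) := by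
  refine ⟨fun n => (hξ.prodMk (hY n)).aemeasurable,
    ((hξ.comp measurable_fst).prodMk measurable_snd).aemeasurable, ?_⟩
  refine tendsto_iff_forall_lipschitz_integral_tendsto.2 fun g ⟨C, hC⟩ ⟨L, hg⟩ => ?_
  have hgC : ∀ z, |g z| ≤ ‖g 0‖ + C := fun z => by
    linarith [abs_sub_abs_le_abs_sub (g z) (g 0), Real.dist_eq (g z) (g 0) ▸ hC z 0,
      Real.norm_eq_abs (g 0)]
  simp only [ProbabilityMeasure.coe_mk,
    Measure.integral_map_compProd_of_abs_le hξ hg.continuous.measurable hgC,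
    integral_map (hξ.prodMk (hY _)).aemeasurable hg.continuous.aestronglyMeasurable,
    integral_cond_eq_inv_smul_setIntegral]
  have hC₀ : 0 ≤ C := dist_self (g 0) ▸ hC 0 0
  exact (h.tendsto_setIntegral_comp_of_lipschitzWith hY hB hξ hg (by positivity) hgC).const_smul _

end StablyConvergesOn

/-- If `(X_n)` converges in probability on `A` to `X_∞` and `(Y_n)`
converges stably on `A` to `K`, then `(X_n, Y_n)` converges stably on `A` to the kernel
`K̄(ω, d(x,y)) = δ_{X_∞(ω)}(dx) ⊗ K(ω, dy)`. -/
theorem stable_convergence_pair {Ω : Type*} [MeasurableSpace Ω]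
    (P : Measure Ω) [IsProbabilityMeasure P] {d d' : ℕ}
    (A : Set Ω) (hA : MeasurableSet A)
    (X : ℕ → Ω → EuclideanSpace ℝ (Fin d')) (Xinf : Ω → EuclideanSpace ℝ (Fin d'))
    (hXinf : Measurable Xinf) (hX : ∀ n, Measurable (X n))
    (hXp : ∀ ε > (0 : ℝ),
      Tendsto (fun n => P ({ω | ε < dist (X n ω) (Xinf ω)} ∩ A)) atTop (nhds 0))
    (Y : ℕ → Ω → EuclideanSpace ℝ (Fin d)) (hY : ∀ n, Measurable (Y n))
    (K : Kernel Ω (EuclideanSpace ℝ (Fin d))) [IsMarkovKernel K]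
    (h : StablyConvergesOn P Y A K) :
    StablyConvergesOn P (fun n ω => (X n ω, Y n ω)) A
      ((Kernel.deterministic Xinf hXinf) ×ₖ K) := by
  intro B hB f hf ⟨C, hC⟩
  rcases eq_or_ne (P (A ∩ B)) 0 with hAB | hAB
  · simp [Measure.restrict_eq_zero.2 hAB]
  have := cond_isProbabilityMeasure hAB
  have hXB : TendstoInMeasure P[|A ∩ B] X atTop Xinf :=
    (tendstoInMeasure_restrict_of_tendsto_measure_inter hA hXp).of_le_smul (by simpa using hAB)
      (cond_inter_le_smul_restrict P A B)
  have hW := tendstoInDistribution_of_tendstoInMeasure_sub _ _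
    (h.tendstoInDistribution_cond hY hB hXinf) hXB.prodMk_sub_prodMk
    (fun n => ((hX n).prodMk (hY n)).aemeasurable)
  have hf_int := ProbabilityMeasure.tendsto_iff_forall_integral_tendsto.1 hW.tendsto
    (.ofNormedAddCommGroup f hf C hC)
  simp only [ProbabilityMeasure.coe_mk, BoundedContinuousFunction.coe_ofNormedAddCommGroup,
    Measure.integral_map_compProd_of_abs_le hXinf hf.measurable hC,
    integral_map ((hX _).prodMk (hY _)).aemeasurable hf.aestronglyMeasurable,
    integral_cond_eq_inv_smul_setIntegral, smul_eq_mul] at hf_int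
  have hAB' : P.real (A ∩ B) ≠ 0 := (measureReal_ne_zero_iff (measure_ne_top _ _)).2 hAB
  simp_rw [Kernel.integral_deterministic_prod hXinf K _ hf.aestronglyMeasurable]
  simpa [← mul_assoc, mul_inv_cancel₀ hAB'] using hf_int.const_mul (P.real (A ∩ B))
end
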